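/- Let 0 ≤ ε ≤ 1 and let h, k, v : E → ℝ be smooth. Then pointwise on E one has A³_ε(h, e^k·v) = e^k·[ v·A³_ε(h,k) + A³_ε(h,v) − ε·( v·(2·B(h,k)² + B(h,h)·B(k,k)) + 4·B(k,h)·B(v,h) + 2·B(h,h)·B(k,v) ) ]. -/

import Mathlib

open Real

noncomputable section

/-- Three-dimensional Euclidean space. -/
abbrev E3 := EuclideanSpace ℝ (Fin 3)

/-- Laplacian of `f : E3 → ℝ` (sum of second partial derivatives). -/
def lap (f : E3 → ℝ) : E3 → ℝ := fun x =>
  ∑ i : Fin 3, fderiv ℝ (fun y => fderiv ℝ f y (EuclideanSpace.single i 1)) x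
    (EuclideanSpace.single i 1)

/-- `B(f,g) = ∇f · ∇g`. -/
def Bp (f g : E3 → ℝ) : E3 → ℝ := fun x => (inner ℝ (gradient f x) (gradient g x) : ℝ)

/-- `T(f,g,h) = B(f,g)·Δh + B(B(f,g),h)`. -/
def Tp (f g h : E3 → ℝ) : E3 → ℝ := fun x => Bp f g x * lap h x + Bp (Bp f g) h x

/-- `B̃(f,g) = ∇(Δf)·∇g + ∇f·∇(Δg) + 2·Δf·Δg + Δ(B(f,g))`. -/
def Btil (f g : E3 → ℝ) : E3 → ℝ := fun x =>
  Bp (lap f) g x + Bp f (lap g) x + 2 * lap f x * lap g x + lap (Bp f g) x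

/-- `L_ε f = Δf − ε·Δ(Δf)`. -/
def Lop (ε : ℝ) (f : E3 → ℝ) : E3 → ℝ := fun x => lap f x - ε * lap (lap f) x

/-- `F_ε(h)`. -/
def Fop (ε : ℝ) (h : E3 → ℝ) : E3 → ℝ := fun x =>
  Bp h h x + ε * (lap h x) ^ 2 +
    ε * (-(Btil h h x) + 2 * Tp h h h x - (Bp h h x) ^ 2)

/-- `G_ε(h,v)`. -/
def Gop (ε : ℝ) (h v : E3 → ℝ) : E3 → ℝ := fun x =>
  Bp h v x + ε * lap h x * lap v x +
    ε * (-(Btil h v x) + 2 * Tp v h h x + Tp h h v x - 2 * Bp h h x * Bp h v x)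

/-- `A¹_ε(f,g) = B(f,g) + ε·Δf·Δg − ε·B̃(f,g)`. -/
def A1 (ε : ℝ) (f g : E3 → ℝ) : E3 → ℝ := fun x =>
  Bp f g x + ε * lap f x * lap g x - ε * Btil f g x

/-- `A²_ε(h) = A¹_ε(h,h) − ε·(2·T(h,h,h) + B(h,h)²)`. -/
def A2 (ε : ℝ) (h : E3 → ℝ) : E3 → ℝ := fun x =>
  A1 ε h h x - ε * (2 * Tp h h h x + (Bp h h x) ^ 2)

/-- `A³_ε(h,g) = −ε·(2·T(g,h,h) + T(h,h,g) + 2·B(h,h)·B(h,g))`. -/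
def A3 (ε : ℝ) (h g : E3 → ℝ) : E3 → ℝ := fun x =>
  -ε * (2 * Tp g h h x + Tp h h g x + 2 * Bp h h x * Bp h g x)

def ee (i : Fin 3) : E3 := EuclideanSpace.single i 1

lemma grad_coord (f : E3 → ℝ) (x : E3) (i : Fin 3) : gradient f x i = fderiv ℝ f x (ee i) := by
  have h := InnerProductSpace.toDual_symm_apply (𝕜 := ℝ) (y := fderiv ℝ f x) (x := ee i)
  rw [gradient, ← h]
  simp only [PiLp.inner_apply, RCLike.inner_apply, conj_trivial, ee,
    EuclideanSpace.single_apply]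
  simp [Finset.sum_ite_eq']

lemma Bp_coord (f g : E3 → ℝ) (x : E3) :
    Bp f g x = ∑ i : Fin 3, fderiv ℝ f x (ee i) * fderiv ℝ g x (ee i) := by
  simp only [Bp, PiLp.inner_apply, RCLike.inner_apply, conj_trivial, grad_coord]
  exact Finset.sum_congr rfl fun i _ => mul_comm _ _

lemma Bp_symm (f g : E3 → ℝ) (x : E3) : Bp f g x = Bp g f x :=
  real_inner_comm _ _

lemma Bp_symm_fun (f g : E3 → ℝ) : Bp f g = Bp g f :=
  funext fun x => Bp_symm f g x

lemma lap_eq (f : E3 → ℝ) (x : E3) :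
    lap f x = ∑ i : Fin 3, fderiv ℝ (fun y => fderiv ℝ f y (ee i)) x (ee i) := rfl

lemma D_smooth {f : E3 → ℝ} (hf : ContDiff ℝ (⊤ : ℕ∞) f) (i : Fin 3) :
    ContDiff ℝ (⊤ : ℕ∞) (fun x => fderiv ℝ f x (ee i)) :=
  (hf.fderiv_right (le_of_eq (by simp))).clm_apply contDiff_const

lemma Bp_smooth {f g : E3 → ℝ} (hf : ContDiff ℝ (⊤ : ℕ∞) f) (hg : ContDiff ℝ (⊤ : ℕ∞) g) :
    ContDiff ℝ (⊤ : ℕ∞) (Bp f g) := by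
  have : Bp f g = fun x => ∑ i : Fin 3, fderiv ℝ f x (ee i) * fderiv ℝ g x (ee i) :=
    funext fun x => Bp_coord f g x
  rw [this]
  exact ContDiff.sum fun i _ => (D_smooth hf i).mul (D_smooth hg i)

lemma fderiv_mul_apply' {f g : E3 → ℝ} {x : E3} (hf : DifferentiableAt ℝ f x)
    (hg : DifferentiableAt ℝ g x) (u : E3) :
    fderiv ℝ (fun y => f y * g y) x u = f x * fderiv ℝ g x u + g x * fderiv ℝ f x u := by
  rw [fderiv_fun_mul hf hg]; simp [mul_comm]

lemma fderiv_add_apply' {f g : E3 → ℝ} {x : E3} (hf : DifferentiableAt ℝ f x)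
    (hg : DifferentiableAt ℝ g x) (u : E3) :
    fderiv ℝ (fun y => f y + g y) x u = fderiv ℝ f x u + fderiv ℝ g x u := by
  rw [fderiv_fun_add hf hg]; rfl

lemma fderiv_expmul {k v : E3 → ℝ} {x : E3} (hk : DifferentiableAt ℝ k x)
    (hv : DifferentiableAt ℝ v x) (u : E3) :
    fderiv ℝ (fun y => Real.exp (k y) * v y) x u
      = Real.exp (k x) * (v x * fderiv ℝ k x u + fderiv ℝ v x u) := by
  rw [fderiv_fun_mul hk.exp hv, fderiv_exp hk]
  simp
  ring

lemma Bp_exp_right (f : E3 → ℝ) {k v : E3 → ℝ} {x : E3} (hk : DifferentiableAt ℝ k x)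
    (hv : DifferentiableAt ℝ v x) :
    Bp f (fun y => Real.exp (k y) * v y) x
      = Real.exp (k x) * (v x * Bp f k x + Bp f v x) := by
  simp only [Bp_coord, fderiv_expmul hk hv]
  rw [mul_add, Finset.mul_sum, Finset.mul_sum, Finset.mul_sum, ← Finset.sum_add_distrib]
  exact Finset.sum_congr rfl fun i _ => by ring

lemma Bp_mul_right (f : E3 → ℝ) {a b : E3 → ℝ} {x : E3} (ha : DifferentiableAt ℝ a x)
    (hb : DifferentiableAt ℝ b x) :
    Bp f (fun y => a y * b y) x = a x * Bp f b x + b x * Bp f a x := by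
  simp only [Bp_coord, fderiv_mul_apply' ha hb]
  rw [Finset.mul_sum, Finset.mul_sum, ← Finset.sum_add_distrib]
  exact Finset.sum_congr rfl fun i _ => by ring

lemma Bp_add_right (f : E3 → ℝ) {a b : E3 → ℝ} {x : E3} (ha : DifferentiableAt ℝ a x)
    (hb : DifferentiableAt ℝ b x) :
    Bp f (fun y => a y + b y) x = Bp f a x + Bp f b x := by
  simp only [Bp_coord, fderiv_add_apply' ha hb]
  rw [← Finset.sum_add_distrib]
  exact Finset.sum_congr rfl fun i _ => by ring

lemma lap_expmul {k v : E3 → ℝ} (hk : ContDiff ℝ (⊤ : ℕ∞) k)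
    (hv : ContDiff ℝ (⊤ : ℕ∞) v) (x : E3) :
    lap (fun y => Real.exp (k y) * v y) x
      = Real.exp (k x) * (lap v x + 2 * Bp k v x + v x * (lap k x + Bp k k x)) := by
  have dk : ∀ y, DifferentiableAt ℝ k y := fun y => hk.differentiable (by simp) y
  have dv : ∀ y, DifferentiableAt ℝ v y := fun y => hv.differentiable (by simp) y
  have hD : ∀ i : Fin 3, (fun y => fderiv ℝ (fun z => Real.exp (k z) * v z) y (ee i))
      = fun y => Real.exp (k y) * (v y * fderiv ℝ k y (ee i) + fderiv ℝ v y (ee i)) :=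
    fun i => funext fun y => fderiv_expmul (dk y) (dv y) _
  have dDk : ∀ i, DifferentiableAt ℝ (fun y => fderiv ℝ k y (ee i)) x :=
    fun i => ((D_smooth hk i).differentiable (by simp)) x
  have dDv : ∀ i, DifferentiableAt ℝ (fun y => fderiv ℝ v y (ee i)) x :=
    fun i => ((D_smooth hv i).differentiable (by simp)) x
  have step : ∀ i : Fin 3,
      fderiv ℝ (fun y => fderiv ℝ (fun z => Real.exp (k z) * v z) y (ee i)) x (ee i)
        = Real.exp (k x) *
            ((v x * fderiv ℝ k x (ee i) + fderiv ℝ v x (ee i)) * fderiv ℝ k x (ee i)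
              + (v x * fderiv ℝ (fun y => fderiv ℝ k y (ee i)) x (ee i)
                + fderiv ℝ k x (ee i) * fderiv ℝ v x (ee i)
                + fderiv ℝ (fun y => fderiv ℝ v y (ee i)) x (ee i))) := by
    intro i
    rw [hD i]
    have h1 : DifferentiableAt ℝ (fun y => v y * fderiv ℝ k y (ee i)) x :=
      (dv x).mul (dDk i)
    have h2 : DifferentiableAt ℝ (fun y => v y * fderiv ℝ k y (ee i) + fderiv ℝ v y (ee i)) x :=
      h1.add (dDv i)
    rw [fderiv_expmul (dk x) h2 (ee i)]
    rw [fderiv_add_apply' h1 (dDv i) (ee i), fderiv_mul_apply' (dv x) (dDk i) (ee i)]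
  rw [lap_eq, Finset.sum_congr rfl fun i _ => step i, lap_eq v, lap_eq k,
    Bp_coord k v x, Bp_coord k k x]
  simp only [mul_add, Finset.mul_sum, ← Finset.sum_add_distrib]
  exact Finset.sum_congr rfl fun i _ => by ring

/-- `A³_ε(h, e^k·v)` expansion (Proposition B.4, second identity). -/
theorem A3_exp_mul_right (ε : ℝ) (hε0 : 0 ≤ ε) (hε1 : ε ≤ 1) (h k v : E3 → ℝ)
    (hh : ContDiff ℝ (⊤ : ℕ∞) h) (hk : ContDiff ℝ (⊤ : ℕ∞) k)
    (hv : ContDiff ℝ (⊤ : ℕ∞) v) (x : E3) :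
    A3 ε h (fun y => Real.exp (k y) * v y) x =
      Real.exp (k x) *
        (v x * A3 ε h k x + A3 ε h v x
          - ε * (v x * (2 * (Bp h k x) ^ 2 + Bp h h x * Bp k k x)
            + 4 * Bp k h x * Bp v h x + 2 * Bp h h x * Bp k v x)) := by
  have dk : ∀ y, DifferentiableAt ℝ k y := fun y => hk.differentiable (by simp) y
  have dv : ∀ y, DifferentiableAt ℝ v y := fun y => hv.differentiable (by simp) y
  have sBhk : ContDiff ℝ (⊤ : ℕ∞) (Bp h k) := Bp_smooth hh hk
  have sBhv : ContDiff ℝ (⊤ : ℕ∞) (Bp h v) := Bp_smooth hh hv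
  have dBhk : ∀ y, DifferentiableAt ℝ (Bp h k) y :=
    fun y => sBhk.differentiable (by simp) y
  have dBhv : ∀ y, DifferentiableAt ℝ (Bp h v) y :=
    fun y => sBhv.differentiable (by simp) y
  have e1 : Bp h (fun y => Real.exp (k y) * v y) x
      = Real.exp (k x) * (v x * Bp h k x + Bp h v x) := Bp_exp_right h (dk x) (dv x)
  have e2 := lap_expmul hk hv x
  have e3 : Bp (Bp h h) (fun y => Real.exp (k y) * v y) x
      = Real.exp (k x) * (v x * Bp (Bp h h) k x + Bp (Bp h h) v x) :=
    Bp_exp_right (Bp h h) (dk x) (dv x)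
  have hBfun : Bp (fun y => Real.exp (k y) * v y) h
      = fun y => Real.exp (k y) * (v y * Bp h k y + Bp h v y) :=
    funext fun y => by
      rw [Bp_symm (fun y => Real.exp (k y) * v y) h y]
      exact Bp_exp_right h (dk y) (dv y)
  have hw : DifferentiableAt ℝ (fun y => v y * Bp h k y + Bp h v y) x :=
    ((dv x).mul (dBhk x)).add (dBhv x)
  have e4 : Bp (Bp (fun y => Real.exp (k y) * v y) h) h x
      = Real.exp (k x) * ((v x * Bp h k x + Bp h v x) * Bp h k x +
          (v x * Bp h (Bp h k) x + Bp h k x * Bp h v x + Bp h (Bp h v) x)) := by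
    rw [Bp_symm (Bp (fun y => Real.exp (k y) * v y) h) h x, hBfun]
    simp only [Bp_exp_right h (dk x) hw, Bp_add_right (a := fun y => v y * Bp h k y) h ((dv x).mul (dBhk x)) (dBhv x),
      Bp_mul_right h (dv x) (dBhk x)]
  simp only [A3, Tp]
  rw [e4, Bp_symm (fun y => Real.exp (k y) * v y) h x, e1, e2, e3,
    Bp_symm_fun k h, Bp_symm_fun v h, Bp_symm (Bp h k) h x, Bp_symm (Bp h v) h x]
  ring
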